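/- Let A_0, …, A_k ⊆ ℤ^n be full-dimensional configurations and B_0, …, B_r ⊆ ℤ^{n+k−r} nonempty configurations such that A_0 * … * A_k ≅ B_0 * … * B_r as configurations in ℤ^{n+k}. If in addition dim(B_i) < n for all i ∈ {0, …, r}, then dim(B_0) + … + dim(B_r) ≥ n − r + (r+1)·k. -/

import Mathlib

open scoped Pointwise

/-- The lattice `ℤ^n`. -/
abbrev ZLat (n : ℕ) := Fin n → ℤ

/-- Inclusion of `ℤ^n` into `ℝ^n`. -/
def toR {n : ℕ} (v : ZLat n) : Fin n → ℝ := fun i => (v i : ℝ)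

/-- The dimension of a configuration: the dimension of its affine hull in `ℝ^n`. -/
noncomputable def confDim {n : ℕ} (A : Finset (ZLat n)) : ℕ :=
  Module.finrank ℝ (affineSpan ℝ (toR '' (A : Set (ZLat n)))).direction

/-- `cayleyE k i` is `e_i ∈ ℤ^k`, where `e_0 = 0` and `e_1, …, e_k` are the
standard basis vectors. -/
def cayleyE (k : ℕ) (i : Fin (k + 1)) : ZLat k :=
  fun j => if (j : ℕ) + 1 = (i : ℕ) then 1 else 0

/-- The Cayley sum `A_0 * ⋯ * A_k ⊆ ℤ^{n+k}` of configurations `A_0, …, A_k ⊆ ℤ^n`. -/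
def cayley {n k : ℕ} (A : Fin (k + 1) → Finset (ZLat n)) : Finset (ZLat (n + k)) :=
  Finset.univ.biUnion fun i => (A i).image fun a => Fin.append a (cayleyE k i)

/-- The vertex set `Δ_k = {e_0, e_1, …, e_k} ⊆ ℤ^k` of the standard unimodular simplex. -/
def stdSimplexConfig (k : ℕ) : Finset (ZLat k) := Finset.univ.image (cayleyE k)

/-- The subgroup `⟨A - A⟩ ⊆ ℤ^n` generated by all differences of elements of `A`. -/
def diffSpan {n : ℕ} (A : Finset (ZLat n)) : AddSubgroup (ZLat n) :=
  AddSubgroup.closure {d | ∃ a ∈ A, ∃ b ∈ A, d = a - b}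

/-- A family `A_0, …, A_k ⊆ ℤ^n` is spanning if `⟨A_0-A_0⟩ + ⋯ + ⟨A_k-A_k⟩ = ℤ^n`. -/
def IsSpanningFamily {n k : ℕ} (A : Fin (k + 1) → Finset (ZLat n)) : Prop :=
  (⨆ i, diffSpan (A i)) = ⊤

/-- The Cayley sum of `A_0, …, A_k` is of join type if the natural homomorphism
`⟨A_0-A_0⟩ ⊕ ⋯ ⊕ ⟨A_k-A_k⟩ → ℤ^n`, `(a_0, …, a_k) ↦ a_0 + ⋯ + a_k`, is injective. -/
def JoinType {n k : ℕ} (A : Fin (k + 1) → Finset (ZLat n)) : Prop :=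
  ∀ d : Fin (k + 1) → ZLat n, (∀ i, d i ∈ diffSpan (A i)) → ∑ i, d i = 0 → ∀ i, d i = 0

/-- The lattice points of the affine hull of `A`, i.e. `aff(A) ∩ ℤ^n`. -/
def affLat {n : ℕ} (A : Finset (ZLat n)) : Set (ZLat n) :=
  {x | toR x ∈ affineSpan ℝ (toR '' (A : Set (ZLat n)))}

/-- Two configurations `A ⊆ ℤ^n`, `B ⊆ ℤ^m` are isomorphic if there is an affine
lattice isomorphism `aff(A) ∩ ℤ^n → aff(B) ∩ ℤ^m` mapping `A` onto `B`. -/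
def ConfigIso {n m : ℕ} (A : Finset (ZLat n)) (B : Finset (ZLat m)) : Prop :=
  ∃ f : ZLat n → ZLat m, ∃ g : ZLat m → ZLat n,
    (∀ x ∈ affLat A, f x ∈ affLat B) ∧
    (∀ y ∈ affLat B, g y ∈ affLat A) ∧
    (∀ x ∈ affLat A, g (f x) = x) ∧
    (∀ y ∈ affLat B, f (g y) = y) ∧
    (∀ x y z, x ∈ affLat A → y ∈ affLat A → z ∈ affLat A →
      f (x + y - z) = f x + f y - f z) ∧
    f '' (A : Set (ZLat n)) = (B : Set (ZLat m))

/-- `F` is a face of the configuration `A`: the intersection of a face of the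
polytope `conv(A)` with `A` (the empty face and `A` itself are allowed). -/
def IsFaceOf {n : ℕ} (F A : Finset (ZLat n)) : Prop :=
  F = ∅ ∨ (F ⊆ A ∧ ∃ l : (Fin n → ℝ) →ₗ[ℝ] ℝ,
    (F : Set (ZLat n)) = {x ∈ (A : Set (ZLat n)) | ∀ y ∈ A, l (toR y) ≤ l (toR x)})

/-- Faces `F_0, …, F_k` of `A` covering `A` form a Cayley decomposition of `A` if
there is a lattice projection `π : ℤ^n → ℤ^k` with `π(F_i) ⊆ {e_i}` for all `i`. -/
def IsCayleyDecomp {n k : ℕ} (A : Finset (ZLat n)) (F : Fin (k + 1) → Finset (ZLat n)) : Prop :=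
  (∀ i, IsFaceOf (F i) A) ∧ (∀ a ∈ A, ∃ i, a ∈ F i) ∧
    ∃ π : ZLat n →+ ZLat k, Function.Surjective π ∧ ∀ i, ∀ x ∈ F i, π x = cayleyE k i

/-- `conv(A)` contains an interior lattice point. -/
def HasIntLatPt {n : ℕ} (A : Finset (ZLat n)) : Prop :=
  ∃ x : ZLat n, toR x ∈ interior (convexHull ℝ (toR '' (A : Set (ZLat n))))

/-- The dilate `c · conv(A)` contains an interior lattice point. -/
def HasIntLatPtDilate {n : ℕ} (c : ℕ) (A : Finset (ZLat n)) : Prop :=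
  ∃ x : ZLat n, toR x ∈ interior ((c : ℝ) • convexHull ℝ (toR '' (A : Set (ZLat n))))

/-- The codegree of the lattice polytope `conv(A)`: the smallest `c ≥ 1` such that
`c · conv(A)` has an interior lattice point. -/
noncomputable def codeg {n : ℕ} (A : Finset (ZLat n)) : ℕ :=
  sInf {c : ℕ | 1 ≤ c ∧ HasIntLatPtDilate c A}

/-!
Write `π` for the projection of `ℝ^(n+k)` onto the last `k` coordinates and `L_i = A_i × {e_i}`
for the layers of `A_0 * ⋯ * A_k`. Reading off the last `r` coordinates of the isomorphism gives a
lattice-affine map `φ` sending the Cayley sum onto the vertices of `Δ_r`; its fibres `G_j` are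
isomorphic to the `B_j`. Since every `A_i` is full-dimensional, every layer has direction
`ker π`, so all the images `φ(L_i)` have the same direction. A layer cannot lie inside one fibre
(that fibre would have dimension `≥ n`), so some layer meets `G_j` and another fibre; by affine
independence of the vertices of `Δ_r` every layer then meets `G_j`. Hence `π` maps the direction
of `G_j` onto `ℝ^k`, and `dim G_j = dim (dir G_j ∩ ker π) + k`. Finally `L_0` is covered by
the `r + 1` sets `L_0 ∩ G_j`, which gives `n ≤ ∑ j, dim (dir G_j ∩ ker π) + r`.
-/

open Module Matrix

section AffineGeometry

variable {k V P : Type*} [Field k] [AddCommGroup V] [Module k V] [AddTorsor V P]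

theorem AffineIndependent.vsub_notMem_vectorSpan {ι : Type*} {p : ι → P}
    (ha : AffineIndependent k p) {s : Set ι} {i j : ι} (hi : i ∉ s) (hj : j ∈ s) :
    p i -ᵥ p j ∉ vectorSpan k (p '' s) := by
  intro h
  rw [← direction_affineSpan] at h
  have hpi := AffineSubspace.vadd_mem_of_mem_direction h
    (mem_affineSpan k (Set.mem_image_of_mem p hj))
  rw [vsub_vadd, ha.mem_affineSpan_iff] at hpi
  exact hi hpi

variable [FiniteDimensional k V]

theorem finrank_vectorSpan_union_le (s t : Set P) :
    finrank k (vectorSpan k (s ∪ t)) ≤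
      finrank k (vectorSpan k s) + finrank k (vectorSpan k t) + 1 := by
  rcases s.eq_empty_or_nonempty with rfl | ⟨p, hp⟩
  · rw [Set.empty_union]; omega
  rcases t.eq_empty_or_nonempty with rfl | ⟨q, hq⟩
  · rw [Set.union_empty]; omega
  rw [← direction_affineSpan, AffineSubspace.span_union,
    AffineSubspace.direction_sup (mem_affineSpan k hp) (mem_affineSpan k hq),
    direction_affineSpan, direction_affineSpan]
  refine (Submodule.finrank_add_le_finrank_add_finrank _ _).trans ?_
  gcongr
  · exact Submodule.finrank_add_le_finrank_add_finrank _ _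
  · exact (finrank_span_le_card _).trans (by simp)

theorem finrank_vectorSpan_biUnion_le {ι : Type*} (t : ι → Set P) {s : Finset ι}
    (hs : s.Nonempty) :
    finrank k (vectorSpan k (⋃ i ∈ s, t i)) + 1 ≤
      ∑ i ∈ s, (finrank k (vectorSpan k (t i)) + 1) := by
  classical
  induction hs using Finset.Nonempty.cons_induction with
  | singleton i => rw [Finset.set_biUnion_singleton, Finset.sum_singleton]
  | cons i s _ _ ih =>
    rw [Finset.sum_cons, Finset.cons_eq_insert, Finset.set_biUnion_insert]
    have := finrank_vectorSpan_union_le (k := k) (t i) (⋃ j ∈ s, t j)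
    omega

theorem Submodule.finrank_eq_finrank_inf_ker_add_finrank_map {W : Type*} [AddCommGroup W]
    [Module k W] (π : V →ₗ[k] W) (p : Submodule k V) :
    finrank k p = finrank k (p ⊓ LinearMap.ker π : Submodule k V) + finrank k (p.map π) := by
  have h := LinearMap.finrank_range_add_finrank_ker (π.domRestrict p)
  rw [LinearMap.range_domRestrict, LinearMap.ker_domRestrict] at h
  have h2 := LinearEquiv.finrank_eq (Submodule.equivMapOfInjective p.subtype
    p.injective_subtype (Submodule.comap p.subtype (LinearMap.ker π)))
  rw [Submodule.map_comap_subtype] at h2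
  omega

end AffineGeometry

lemma toR_zero {N : ℕ} : toR (0 : ZLat N) = 0 := by funext t; simp [toR]

lemma confDim_eq_finrank_vectorSpan {N : ℕ} (S : Finset (ZLat N)) :
    confDim S = finrank ℝ (vectorSpan ℝ (toR '' (S : Set (ZLat N)))) := by
  rw [confDim, direction_affineSpan]

lemma confDim_mono {N : ℕ} {S T : Finset (ZLat N)} (h : S ⊆ T) : confDim S ≤ confDim T := by
  simp only [confDim_eq_finrank_vectorSpan]
  exact Submodule.finrank_mono (vectorSpan_mono ℝ (Set.image_mono (Finset.coe_subset.2 h)))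

lemma nonempty_of_confDim_pos {N : ℕ} {S : Finset (ZLat N)} (h : 0 < confDim S) :
    S.Nonempty := by
  rw [Finset.nonempty_iff_ne_empty]
  rintro rfl
  rw [confDim_eq_finrank_vectorSpan, Finset.coe_empty, Set.image_empty, vectorSpan_empty,
    finrank_bot] at h
  exact h.false

def IsLatticeAffine {N M : ℕ} (f : ZLat N → ZLat M) : Prop :=
  ∀ x y z, f (x + y - z) = f x + f y - f z

section Linearization

variable {N M : ℕ} {f : ZLat N → ZLat M}

def linMatrix (f : ZLat N → ZLat M) : Matrix (Fin M) (Fin N) ℤ :=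
  Matrix.of fun t s => f (Pi.single s 1) t - f 0 t

lemma linMatrix_mulVec (hf : IsLatticeAffine f) (x : ZLat N) :
    linMatrix f *ᵥ x = f x - f 0 := by
  let ψ : ZLat N →+ ZLat M := AddMonoidHom.mk' (fun x => f x - f 0) fun x y => by
    have h := hf x y 0
    rw [sub_zero] at h
    simp only [h]
    abel
  have hψ : linMatrix f = LinearMap.toMatrix' ψ.toIntLinearMap := by
    ext t s
    simp [linMatrix, LinearMap.toMatrix'_apply, ψ]
  rw [hψ, LinearMap.toMatrix'_mulVec]
  rfl

noncomputable def realAffine (f : ZLat N → ZLat M) : (Fin N → ℝ) →ᵃ[ℝ] (Fin M → ℝ) :=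
  ((linMatrix f).map (Int.cast : ℤ → ℝ)).mulVecLin.toAffineMap +
    AffineMap.const ℝ (Fin N → ℝ) (toR (f 0))

lemma realAffine_toR (hf : IsLatticeAffine f) (x : ZLat N) :
    realAffine f (toR x) = toR (f x) := by
  funext t
  have h := RingHom.map_mulVec (Int.castRingHom ℝ) (linMatrix f) x t
  rw [linMatrix_mulVec hf] at h
  change ((linMatrix f).map (Int.castRingHom ℝ) *ᵥ (Int.castRingHom ℝ) ∘ x) t + toR (f 0) t =
    toR (f x) t
  rw [← h]
  simp [toR]

lemma vectorSpan_toR_image (hf : IsLatticeAffine f) (S : Set (ZLat N)) :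
    vectorSpan ℝ (toR '' (f '' S)) = (vectorSpan ℝ (toR '' S)).map (realAffine f).linear := by
  rw [AffineMap.map_vectorSpan, Set.image_image, Set.image_image]
  simp only [realAffine_toR hf]

lemma confDim_image_le (hf : IsLatticeAffine f) (S : Finset (ZLat N)) :
    confDim (S.image f) ≤ confDim S := by
  rw [confDim_eq_finrank_vectorSpan, confDim_eq_finrank_vectorSpan, Finset.coe_image,
    vectorSpan_toR_image hf]
  exact Submodule.finrank_map_le _ _

lemma confDim_image_of_leftInverse {g : ZLat M → ZLat N}
    (hf : IsLatticeAffine f) (hg : IsLatticeAffine g) (hgf : Function.LeftInverse g f)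
    (S : Finset (ZLat N)) : confDim (S.image f) = confDim S := by
  refine (confDim_image_le hf S).antisymm ?_
  calc confDim S = confDim ((S.image f).image g) := by
        rw [Finset.image_image, hgf.comp_eq_id, Finset.image_id]
    _ ≤ confDim (S.image f) := confDim_image_le hg _

lemma realAffine_linear_injective {f : ZLat N → ZLat N}
    (hf : IsLatticeAffine f) (hinj : Function.Injective f) :
    Function.Injective (realAffine f).linear := by
  have hdet : (linMatrix f).det ≠ 0 := by
    rw [Ne, ← exists_mulVec_eq_zero_iff]
    rintro ⟨v, hv, hv0⟩
    have h := linMatrix_mulVec hf v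
    rw [hv0, eq_comm, sub_eq_zero] at h
    exact hv (hinj h)
  have hdetR : ((linMatrix f).map (Int.cast : ℤ → ℝ)).det ≠ 0 := by
    rw [← Int.cast_det]
    exact_mod_cast hdet
  have hlin : (realAffine f).linear = ((linMatrix f).map (Int.cast : ℤ → ℝ)).mulVecLin := by
    simp [realAffine]
  rw [hlin]
  exact mulVec_injective_of_det_ne_zero hdetR

lemma confDim_image_of_injective (hNM : N = M) (hf : IsLatticeAffine f)
    (hinj : Function.Injective f) (S : Finset (ZLat N)) : confDim (S.image f) = confDim S := by
  subst hNM
  rw [confDim_eq_finrank_vectorSpan, confDim_eq_finrank_vectorSpan, Finset.coe_image,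
    vectorSpan_toR_image hf]
  exact LinearEquiv.finrank_eq
    (Submodule.equivMapOfInjective _ (realAffine_linear_injective hf hinj) _).symm

end Linearization

section CayleyVertices

variable {k : ℕ}

lemma cayleyE_zero (k : ℕ) : cayleyE k 0 = 0 := by
  funext t; simp [cayleyE]

lemma toR_cayleyE_succ (t : Fin k) : toR (cayleyE k t.succ) = Pi.single t 1 := by
  funext s
  by_cases h : s = t
  · subst h; simp [toR, cayleyE]
  · simp [toR, cayleyE, h, Fin.val_inj]

theorem affineIndependent_toR_cayleyE (k : ℕ) : AffineIndependent ℝ (toR ∘ cayleyE k) := by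
  rw [affineIndependent_iff_linearIndependent_vsub ℝ _ 0]
  have h : (fun i : {i : Fin (k + 1) // i ≠ 0} => (toR ∘ cayleyE k) i -ᵥ (toR ∘ cayleyE k) 0) =
      Pi.basisFun ℝ (Fin k) ∘ fun i => i.1.pred i.2 := by
    funext ⟨i, hi⟩
    simp only [Function.comp_apply, cayleyE_zero, toR_zero, vsub_eq_sub, sub_zero,
      Pi.basisFun_apply]
    rw [← toR_cayleyE_succ, Fin.succ_pred]
  rw [h]
  exact (Pi.basisFun ℝ _).linearIndependent.comp _ fun i j hij => Subtype.ext (Fin.pred_inj.1 hij)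

lemma cayleyE_injective (k : ℕ) : Function.Injective (cayleyE k) :=
  (affineIndependent_toR_cayleyE k).injective.of_comp

lemma vectorSpan_range_toR_cayleyE (k : ℕ) :
    vectorSpan ℝ (Set.range (toR ∘ cayleyE k)) = ⊤ := by
  refine AffineSubspace.vectorSpan_eq_top_of_affineSpan_eq_top _ _ _ ?_
  rw [(affineIndependent_toR_cayleyE k).affineSpan_eq_top_iff_card_eq_finrank_add_one]
  simp

end CayleyVertices

section Layers

variable {n k : ℕ}

def lastCoords {m r : ℕ} (x : ZLat (m + r)) : ZLat r := fun t => x (Fin.natAdd m t)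

@[simp]
lemma lastCoords_append (a : ZLat n) (c : ZLat k) : lastCoords (Fin.append a c) = c := by
  funext t; simp [lastCoords]

noncomputable def tailProj (n k : ℕ) : (Fin (n + k) → ℝ) →ₗ[ℝ] (Fin k → ℝ) :=
  LinearMap.funLeft ℝ ℝ (Fin.natAdd n)

lemma finrank_ker_tailProj : finrank ℝ (LinearMap.ker (tailProj n k)) = n := by
  have hsurj : Function.Surjective (tailProj n k) :=
    LinearMap.funLeft_surjective_of_injective _ _ _ (Fin.natAdd_injective _ _)
  have h := LinearMap.finrank_range_add_finrank_ker (tailProj n k)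
  rw [LinearMap.range_eq_top.2 hsurj, finrank_top, finrank_fin_fun, finrank_fin_fun] at h
  omega

lemma vectorSpan_toR_image_lastCoords (S : Set (ZLat (n + k))) :
    vectorSpan ℝ (toR '' (lastCoords '' S)) = (vectorSpan ℝ (toR '' S)).map (tailProj n k) := by
  rw [← LinearMap.toAffineMap_linear (tailProj n k), AffineMap.map_vectorSpan, Set.image_image,
    Set.image_image]
  rfl

lemma confDim_image_append (S : Finset (ZLat n)) (c : ZLat k) :
    confDim (S.image fun a => Fin.append a c) = confDim S :=
  confDim_image_of_leftInverse (g := fun x i => x (Fin.castAdd k i))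
    (fun x y z => by funext t; refine Fin.addCases (fun i => ?_) (fun i => ?_) t <;> simp)
    (fun x y z => rfl) (fun a => by funext i; simp) S

lemma vectorSpan_toR_image_append {S : Finset (ZLat n)} (hS : confDim S = n) (c : ZLat k) :
    vectorSpan ℝ (toR '' ((S.image fun a => Fin.append a c : Finset (ZLat (n + k))) :
      Set (ZLat (n + k)))) = LinearMap.ker (tailProj n k) := by
  refine Submodule.eq_of_le_of_finrank_eq ?_ ?_
  · rw [LinearMap.le_ker_iff_map, ← vectorSpan_toR_image_lastCoords,
      vectorSpan_eq_bot_iff_subsingleton]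
    refine Set.Subsingleton.image ((Set.subsingleton_singleton (a := c)).anti ?_) _
    rintro _ ⟨x, hx, rfl⟩
    obtain ⟨a, -, rfl⟩ := Finset.mem_image.1 hx
    simp
  · rw [← confDim_eq_finrank_vectorSpan, confDim_image_append, hS, finrank_ker_tailProj]

lemma confDim_eq_finrank_inf_ker_add (S : Finset (ZLat (n + k)))
    (hS : ∀ i, ∃ x ∈ S, lastCoords x = cayleyE k i) :
    confDim S = finrank ℝ (vectorSpan ℝ (toR '' (S : Set (ZLat (n + k)))) ⊓
      LinearMap.ker (tailProj n k) : Submodule ℝ (Fin (n + k) → ℝ)) + k := by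
  have htop : (vectorSpan ℝ (toR '' (S : Set (ZLat (n + k))))).map (tailProj n k) = ⊤ := by
    rw [← vectorSpan_toR_image_lastCoords, eq_top_iff, ← vectorSpan_range_toR_cayleyE]
    refine vectorSpan_mono ℝ ?_
    rintro _ ⟨i, rfl⟩
    obtain ⟨x, hx, hxi⟩ := hS i
    exact ⟨_, ⟨x, hx, hxi⟩, rfl⟩
  rw [confDim_eq_finrank_vectorSpan,
    Submodule.finrank_eq_finrank_inf_ker_add_finrank_map (tailProj n k), htop, finrank_top,
    finrank_fin_fun]

end Layers

section CayleySum

variable {n k r : ℕ}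

def cayleyLayer (A : Fin (k + 1) → Finset (ZLat n)) (i : Fin (k + 1)) : Finset (ZLat (n + k)) :=
  (A i).image fun a => Fin.append a (cayleyE k i)

lemma cayleyLayer_subset_cayley (A : Fin (k + 1) → Finset (ZLat n)) (i : Fin (k + 1)) :
    cayleyLayer A i ⊆ cayley A :=
  Finset.subset_biUnion_of_mem (cayleyLayer A) (Finset.mem_univ i)

lemma mem_cayley_iff {A : Fin (k + 1) → Finset (ZLat n)} {x : ZLat (n + k)} :
    x ∈ cayley A ↔ ∃ i, x ∈ cayleyLayer A i := by
  simp [cayley, cayleyLayer]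

lemma exists_lastCoords_eq_of_mem_cayley {A : Fin (k + 1) → Finset (ZLat n)} {x : ZLat (n + k)}
    (hx : x ∈ cayley A) : ∃ i, lastCoords x = cayleyE k i := by
  obtain ⟨i, hi⟩ := mem_cayley_iff.1 hx
  obtain ⟨a, -, rfl⟩ := Finset.mem_image.1 hi
  exact ⟨i, lastCoords_append a _⟩

lemma cayley_filter_lastCoords_eq (A : Fin (k + 1) → Finset (ZLat n)) (i : Fin (k + 1)) :
    (cayley A).filter (fun x => lastCoords x = cayleyE k i) = cayleyLayer A i := by
  ext x
  simp only [Finset.mem_filter, mem_cayley_iff]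
  constructor
  · rintro ⟨⟨i', hx⟩, hxi⟩
    obtain ⟨a, -, rfl⟩ := Finset.mem_image.1 hx
    have hi : i' = i := cayleyE_injective k (by simpa using hxi)
    exact hi ▸ hx
  · intro hx
    obtain ⟨a, -, rfl⟩ := Finset.mem_image.1 hx
    exact ⟨⟨i, hx⟩, lastCoords_append a _⟩

variable {A : Fin (k + 1) → Finset (ZLat n)}

lemma vectorSpan_toR_cayleyLayer (hfull : ∀ i, confDim (A i) = n) (i : Fin (k + 1)) :
    vectorSpan ℝ (toR '' (cayleyLayer A i : Set (ZLat (n + k)))) =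
      LinearMap.ker (tailProj n k) :=
  vectorSpan_toR_image_append (hfull i) _

lemma affLat_cayley_eq_univ (hfull : ∀ i, confDim (A i) = n) (hn : 0 < n) :
    affLat (cayley A) = Set.univ := by
  have hA : ∀ i, (A i).Nonempty := fun i => nonempty_of_confDim_pos ((hfull i).symm ▸ hn)
  have hdim : confDim (cayley A) = n + k := by
    rw [confDim_eq_finrank_inf_ker_add _ fun i => ?_]
    · rw [inf_eq_right.2, finrank_ker_tailProj]
      rw [← vectorSpan_toR_cayleyLayer hfull 0]
      exact vectorSpan_mono ℝ (Set.image_mono (Finset.coe_subset.2 (cayleyLayer_subset_cayley A 0)))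
    · obtain ⟨a, ha⟩ := hA i
      exact ⟨_, cayleyLayer_subset_cayley A i (Finset.mem_image_of_mem _ ha), lastCoords_append _ _⟩
  have htop : vectorSpan ℝ (toR '' (cayley A : Set (ZLat (n + k)))) = ⊤ :=
    Submodule.eq_top_of_finrank_eq (by rw [← confDim_eq_finrank_vectorSpan, hdim, finrank_fin_fun])
  obtain ⟨a, ha⟩ := hA 0
  have hne : (toR '' (cayley A : Set (ZLat (n + k)))).Nonempty :=
    ⟨_, _, cayleyLayer_subset_cayley A 0 (Finset.mem_image_of_mem _ ha), rfl⟩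
  rw [← AffineSubspace.affineSpan_eq_top_iff_vectorSpan_eq_top_of_nonempty _ _ _ hne] at htop
  ext x
  simp [affLat, htop]

end CayleySum

section CayleyFibers

variable {n k r : ℕ} {A : Fin (k + 1) → Finset (ZLat n)}

def cayleyFiber (A : Fin (k + 1) → Finset (ZLat n)) (φ : ZLat (n + k) → ZLat r)
    (j : Fin (r + 1)) : Finset (ZLat (n + k)) :=
  (cayley A).filter fun x => φ x = cayleyE r j

variable {φ : ZLat (n + k) → ZLat r}

lemma le_sum_finrank_inf_ker (hfull : ∀ i, confDim (A i) = n)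
    (hmaps : ∀ x ∈ cayley A, ∃ j, φ x = cayleyE r j) :
    n ≤ ∑ j, finrank ℝ (vectorSpan ℝ (toR '' (cayleyFiber A φ j : Set (ZLat (n + k)))) ⊓
      LinearMap.ker (tailProj n k) : Submodule ℝ (Fin (n + k) → ℝ)) + r := by
  set T : Fin (r + 1) → Set (Fin (n + k) → ℝ) :=
    fun j => toR '' ((cayleyLayer A 0 : Set (ZLat (n + k))) ∩ cayleyFiber A φ j)
  have hcover : toR '' (cayleyLayer A 0 : Set (ZLat (n + k))) ⊆ ⋃ j ∈ Finset.univ, T j := by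
    rintro _ ⟨x, hx, rfl⟩
    obtain ⟨j, hj⟩ := hmaps x (cayleyLayer_subset_cayley A 0 hx)
    simp only [Finset.mem_univ, Set.iUnion_true, Set.mem_iUnion]
    exact ⟨j, x, ⟨hx, Finset.mem_filter.2 ⟨cayleyLayer_subset_cayley A 0 hx, hj⟩⟩, rfl⟩
  have hT : ∀ j, vectorSpan ℝ (T j) ≤ vectorSpan ℝ (toR '' (cayleyFiber A φ j :
      Set (ZLat (n + k)))) ⊓ LinearMap.ker (tailProj n k) := fun j =>
    le_inf (vectorSpan_mono ℝ (Set.image_mono Set.inter_subset_right))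
      (vectorSpan_toR_cayleyLayer hfull 0 ▸
        vectorSpan_mono ℝ (Set.image_mono Set.inter_subset_left))
  calc n = finrank ℝ (vectorSpan ℝ (toR '' (cayleyLayer A 0 : Set (ZLat (n + k))))) := by
        rw [vectorSpan_toR_cayleyLayer hfull, finrank_ker_tailProj]
    _ ≤ finrank ℝ (vectorSpan ℝ (⋃ j ∈ Finset.univ, T j)) :=
        Submodule.finrank_mono (vectorSpan_mono ℝ hcover)
    _ ≤ ∑ j, (finrank ℝ (vectorSpan ℝ (T j)) + 1) - 1 :=
        Nat.le_sub_one_of_lt (finrank_vectorSpan_biUnion_le T Finset.univ_nonempty)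
    _ ≤ _ := by
        rw [Finset.sum_add_distrib, Finset.sum_const, Finset.card_univ, Fintype.card_fin,
          smul_eq_mul, mul_one]
        have := Finset.sum_le_sum fun j (_ : j ∈ Finset.univ) => Submodule.finrank_mono (hT j)
        omega

lemma confDim_le_of_cayleyLayer_subset (hfull : ∀ i, confDim (A i) = n) {i : Fin (k + 1)}
    {T : Finset (ZLat (n + k))} (h : cayleyLayer A i ⊆ T) : n ≤ confDim T := by
  calc n = confDim (cayleyLayer A i) := (hfull i ▸ confDim_image_append (A i) (cayleyE k i)).symm
    _ ≤ confDim T := confDim_mono h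

lemma vectorSpan_toR_image_cayleyLayer (hfull : ∀ i, confDim (A i) = n) (hφ : IsLatticeAffine φ)
    (i : Fin (k + 1)) :
    vectorSpan ℝ (toR '' (φ '' (cayleyLayer A i : Set (ZLat (n + k))))) =
      (LinearMap.ker (tailProj n k)).map (realAffine φ).linear := by
  rw [vectorSpan_toR_image hφ, vectorSpan_toR_cayleyLayer hfull]

lemma exists_mem_cayleyLayer_inter_cayleyFiber (hfull : ∀ i, confDim (A i) = n)
    (hφ : IsLatticeAffine φ)
    (hmaps : ∀ x ∈ cayley A, ∃ j, φ x = cayleyE r j)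
    (hne : ∀ j, (cayleyFiber A φ j).Nonempty) (hlt : ∀ j, confDim (cayleyFiber A φ j) < n)
    (i : Fin (k + 1)) (j : Fin (r + 1)) : ∃ x ∈ cayleyLayer A i, x ∈ cayleyFiber A φ j := by
  by_contra! hmiss
  obtain ⟨x₁, hx₁⟩ := hne j
  obtain ⟨hx₁C, hφx₁⟩ := Finset.mem_filter.1 hx₁
  obtain ⟨i₁, hx₁L⟩ := mem_cayley_iff.1 hx₁C
  obtain ⟨x₂, hx₂L, hx₂⟩ : ∃ x₂ ∈ cayleyLayer A i₁, x₂ ∉ cayleyFiber A φ j := by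
    by_contra! hsub
    exact (hlt j).not_ge (confDim_le_of_cayleyLayer_subset hfull hsub)
  obtain ⟨j₂, hφx₂⟩ := hmaps x₂ (cayleyLayer_subset_cayley A i₁ hx₂L)
  have hj₂ : j₂ ≠ j := by
    rintro rfl
    exact hx₂ (Finset.mem_filter.2 ⟨cayleyLayer_subset_cayley A i₁ hx₂L, hφx₂⟩)
  have hmem : toR (cayleyE r j) - toR (cayleyE r j₂) ∈
      vectorSpan ℝ (toR '' (φ '' (cayleyLayer A i : Set (ZLat (n + k))))) := by
    rw [vectorSpan_toR_image_cayleyLayer hfull hφ, ← vectorSpan_toR_image_cayleyLayer hfull hφ i₁,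
      ← hφx₁, ← hφx₂]
    exact vsub_mem_vectorSpan ℝ ⟨_, ⟨x₁, hx₁L, rfl⟩, rfl⟩ ⟨_, ⟨x₂, hx₂L, rfl⟩, rfl⟩
  have hsub : toR '' (φ '' (cayleyLayer A i : Set (ZLat (n + k)))) ⊆
      (toR ∘ cayleyE r) '' {j}ᶜ := by
    rintro _ ⟨_, ⟨x, hx, rfl⟩, rfl⟩
    obtain ⟨j', hj'⟩ := hmaps x (cayleyLayer_subset_cayley A i hx)
    refine ⟨j', ?_, by rw [Function.comp_apply, hj']⟩
    rintro rfl
    exact hmiss x hx (Finset.mem_filter.2 ⟨cayleyLayer_subset_cayley A i hx, hj'⟩)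
  exact (affineIndependent_toR_cayleyE r).vsub_notMem_vectorSpan (by simp)
    (Set.mem_compl_singleton_iff.2 hj₂)
    (vectorSpan_mono ℝ hsub hmem)

theorem sum_confDim_cayleyFiber_ge (hfull : ∀ i, confDim (A i) = n)
    (hφ : IsLatticeAffine φ)
    (hmaps : ∀ x ∈ cayley A, ∃ j, φ x = cayleyE r j)
    (hne : ∀ j, (cayleyFiber A φ j).Nonempty) (hlt : ∀ j, confDim (cayleyFiber A φ j) < n) :
    n + (r + 1) * k ≤ ∑ j, confDim (cayleyFiber A φ j) + r := by
  have hsplit : ∀ j, confDim (cayleyFiber A φ j) =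
      finrank ℝ (vectorSpan ℝ (toR '' (cayleyFiber A φ j : Set (ZLat (n + k)))) ⊓
        LinearMap.ker (tailProj n k) : Submodule ℝ (Fin (n + k) → ℝ)) + k := fun j =>
    confDim_eq_finrank_inf_ker_add _ fun i => by
      obtain ⟨x, hxL, hxF⟩ := exists_mem_cayleyLayer_inter_cayleyFiber hfull hφ hmaps hne hlt i j
      obtain ⟨a, -, rfl⟩ := Finset.mem_image.1 hxL
      exact ⟨_, hxF, lastCoords_append a _⟩
  have := le_sum_finrank_inf_ker hfull hmaps
  simp only [hsplit, Finset.sum_add_distrib, Finset.sum_const, Finset.card_univ,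
    Fintype.card_fin, smul_eq_mul]
  linarith

end CayleyFibers

/-- If `A_0, …, A_k ⊆ ℤ^n` are full-dimensional configurations,
`B_0, …, B_r ⊆ ℤ^{n+k-r}` are nonempty configurations with
`A_0 * ⋯ * A_k ≅ B_0 * ⋯ * B_r` in `ℤ^{n+k}`, and `dim(B_i) < n` for all `i`,
then `dim(B_0) + ⋯ + dim(B_r) ≥ n - r + (r+1)·k`. -/
theorem cayley_summand_dim_sum_ge {n k r : ℕ} (hr : r ≤ n + k)
    (A : Fin (k + 1) → Finset (ZLat n)) (hfull : ∀ i, confDim (A i) = n)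
    (B : Fin (r + 1) → Finset (ZLat (n + k - r))) (hB : ∀ i, (B i).Nonempty)
    (hiso : ConfigIso (cayley A) (cayley B))
    (hlt : ∀ i, confDim (B i) < n) :
    (n : ℤ) - r + (r + 1) * k ≤ ∑ i, (confDim (B i) : ℤ) := by
  obtain ⟨f, g, -, -, hgf, -, hf, hfB⟩ := hiso
  have hA : ∀ x, x ∈ affLat (cayley A) := by
    simp [affLat_cayley_eq_univ hfull (Nat.zero_lt_of_lt (hlt 0))]
  have hfaff : IsLatticeAffine f := fun x y z => hf x y z (hA x) (hA y) (hA z)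
  have hinj : Function.Injective f := Function.LeftInverse.injective fun x => hgf x (hA x)
  have himage : (cayley A).image f = cayley B :=
    Finset.coe_injective (by rw [Finset.coe_image, hfB])
  set φ : ZLat (n + k) → ZLat r := fun x => lastCoords (f x)
  have hfiber : ∀ j, (cayleyFiber A φ j).image f = cayleyLayer B j := fun j => by
    rw [← cayley_filter_lastCoords_eq, ← himage, Finset.filter_image]
    rfl
  have hdim : ∀ j, confDim (cayleyFiber A φ j) = confDim (B j) := fun j => by
    rw [← confDim_image_of_injective (by omega) hfaff hinj, hfiber, cayleyLayer,
      confDim_image_append]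
  have key := sum_confDim_cayleyFiber_ge (φ := φ) hfull
    (fun x y z => by funext t; simp [φ, lastCoords, hfaff x y z])
    (fun x hx => exists_lastCoords_eq_of_mem_cayley (himage ▸ Finset.mem_image_of_mem f hx))
    (fun j => by rw [← Finset.image_nonempty (f := f), hfiber]; exact (hB j).image _)
    (fun j => hdim j ▸ hlt j)
  simp only [hdim] at key
  zify at key
  linarith
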